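/- Let G be a nilpotent group endowed with a left-invariant distance d, and suppose that for every x ∈ G the right translation R_x(y) = yx is continuous. Then the inversion map Inv : G → G, x ↦ x⁻¹, is Cauchy-continuous: it is continuous and maps Cauchy sequences in G to Cauchy sequences in G. -/

import Mathlib

/-!
A left-invariant distance is governed by the length `dist x 1`, which is subadditive and
invariant under inversion, and `dist x⁻¹ y⁻¹ = dist (x * y⁻¹) 1`. For a Cauchy filter `f`,
writing `x * y⁻¹ = w * (w⁻¹ * x) * (w⁻¹ * y)⁻¹ * w⁻¹` with `w` eventually in `f` reduces the
Cauchy property of `f⁻¹` to equicontinuity at `1` of the conjugations by elements eventually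
in `f`. This equicontinuity is proved on the lower central series from the bottom up: it holds
trivially on `⊥`, and it passes from `⁅H, ⊤⁆` to `H` because for `g` close to a fixed `w`,
conjugation by `g` differs from the (continuous) conjugation by `w` by a conjugate of the small
commutator `⁅w⁻¹ * g, x⁆ ∈ ⁅H, ⊤⁆`.
-/

open Filter
open scoped commutatorElement

section LeftInvariant

variable {G : Type*} [Group G] [PseudoMetricSpace G]

def EventuallyEquicontinuousConjOn (f : Filter G) (H : Subgroup G) : Prop :=
  ∀ ε > 0, ∃ δ > 0, ∀ᶠ g in f, ∀ x ∈ H, dist x 1 < δ → dist (g * x * g⁻¹) 1 < ε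

theorem eventuallyEquicontinuousConjOn_bot (f : Filter G) :
    EventuallyEquicontinuousConjOn f ⊥ := fun ε hε =>
  ⟨1, one_pos, .of_forall fun g x hx _ => by simpa [Subgroup.mem_bot.1 hx] using hε⟩

variable [IsIsometricSMul G G]

theorem dist_eq_dist_inv_mul_one (x y : G) : dist x y = dist (y⁻¹ * x) 1 := by
  rw [← dist_mul_left y⁻¹ x y, inv_mul_cancel]

theorem dist_inv_one (x : G) : dist x⁻¹ 1 = dist x 1 := by
  rw [dist_comm, dist_eq_dist_inv_mul_one, mul_one, inv_inv]

theorem dist_mul_one_le (x y : G) : dist (x * y) 1 ≤ dist x 1 + dist y 1 :=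
  calc dist (x * y) 1 ≤ dist (x * y) x + dist x 1 := dist_triangle _ _ _
    _ = dist x 1 + dist y 1 := by rw [dist_eq_dist_inv_mul_one (x * y), inv_mul_cancel_left,
      add_comm]

theorem dist_inv_inv_eq_dist_mul_inv_one (x y : G) : dist x⁻¹ y⁻¹ = dist (x * y⁻¹) 1 := by
  rw [dist_eq_dist_inv_mul_one, inv_inv, ← dist_inv_one, mul_inv_rev, inv_inv]

theorem dist_commutatorElement_one_le (x y : G) :
    dist ⁅x, y⁆ 1 ≤ 2 * dist x 1 + 2 * dist y 1 := by
  have h₁ := dist_mul_one_le (x * y * x⁻¹) y⁻¹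
  have h₂ := dist_mul_one_le (x * y) x⁻¹
  have h₃ := dist_mul_one_le x y
  rw [dist_inv_one] at h₁ h₂
  rw [commutatorElement_def]
  linarith

theorem continuous_inv_of_continuous_mul_const (hR : ∀ x : G, Continuous fun y : G => y * x) :
    Continuous fun x : G => x⁻¹ := by
  refine continuous_iff_continuousAt.2 fun b => ?_
  have h := tendsto_iff_dist_tendsto_zero.1 ((hR b⁻¹).tendsto b)
  rw [mul_inv_cancel] at h
  rw [ContinuousAt, tendsto_iff_dist_tendsto_zero]
  simpa only [dist_inv_inv_eq_dist_mul_inv_one] using h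

theorem EventuallyEquicontinuousConjOn.of_commutator_top
    (hR : ∀ x : G, Continuous fun y : G => y * x) {f : Filter G} (hf : Cauchy f)
    {H : Subgroup G} (h : EventuallyEquicontinuousConjOn f ⁅H, ⊤⁆) :
    EventuallyEquicontinuousConjOn f H := by
  intro ε hε
  obtain ⟨δ, hδ, hconj⟩ := h (ε / 2) (half_pos hε)
  obtain ⟨hne, hsmall⟩ := Metric.cauchy_iff.1 hf
  obtain ⟨t, htf, ht⟩ := hsmall (δ / 4) (by positivity)
  obtain ⟨w, hw, hwt⟩ := (hconj.and htf).exists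
  have hconj_w : Continuous fun y => w * y * w⁻¹ := (hR w⁻¹).comp (isometry_mul_left w).continuous
  obtain ⟨δ₁, hδ₁, hw_small⟩ := Metric.continuous_iff.1 hconj_w 1 (ε / 2) (half_pos hε)
  refine ⟨min δ₁ (δ / 4), by positivity, ?_⟩
  filter_upwards [htf] with g hg x hx hxδ
  set d := w⁻¹ * g
  have hd : dist d 1 < δ / 4 := by rw [← dist_eq_dist_inv_mul_one]; exact ht g hg w hwt
  have hdx_mem : ⁅d, x⁆ ∈ (⁅H, ⊤⁆ : Subgroup G) := by
    rw [Subgroup.commutator_comm (H₁ := H)]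
    exact Subgroup.commutator_mem_commutator (Subgroup.mem_top d) hx
  have hdx : dist ⁅d, x⁆ 1 < δ := by
    linarith [dist_commutatorElement_one_le d x, min_le_right δ₁ (δ / 4)]
  have hx_conj : dist (w * x * w⁻¹) 1 < ε / 2 := by
    simpa only [mul_one, mul_inv_cancel] using hw_small x (hxδ.trans_le (min_le_left _ _))
  calc dist (g * x * g⁻¹) 1 = dist (w * ⁅d, x⁆ * w⁻¹ * (w * x * w⁻¹)) 1 := by
        simp only [d, commutatorElement_def]; group
    _ ≤ dist (w * ⁅d, x⁆ * w⁻¹) 1 + dist (w * x * w⁻¹) 1 := dist_mul_one_le _ _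
    _ < ε / 2 + ε / 2 := add_lt_add (hw _ hdx_mem hdx) hx_conj
    _ = ε := add_halves ε

theorem eventuallyEquicontinuousConjOn_lowerCentralSeries
    (hR : ∀ x : G, Continuous fun y : G => y * x) {f : Filter G} (hf : Cauchy f) {n m : ℕ}
    (h : (⊤ : Subgroup G).lowerCentralSeries (n + m) = ⊥) :
    EventuallyEquicontinuousConjOn f ((⊤ : Subgroup G).lowerCentralSeries n) := by
  induction m generalizing n with
  | zero =>
    rw [Nat.add_zero] at h
    exact h ▸ eventuallyEquicontinuousConjOn_bot f
  | succ m ih =>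
    exact (ih (n := n + 1) (by rwa [Nat.add_right_comm])).of_commutator_top hR hf

theorem Cauchy.map_inv_of_eventuallyEquicontinuousConjOn_top {f : Filter G} (hf : Cauchy f)
    (h : EventuallyEquicontinuousConjOn f ⊤) : Cauchy (map (fun x => x⁻¹) f) := by
  obtain ⟨hne, hsmall⟩ := Metric.cauchy_iff.1 hf
  refine Metric.cauchy_iff.2 ⟨hne.map _, fun ε hε => ?_⟩
  obtain ⟨δ, hδ, hconj⟩ := h ε hε
  obtain ⟨t, htf, ht⟩ := hsmall (δ / 2) (half_pos hδ)
  obtain ⟨w, hw, hwt⟩ := (hconj.and htf).exists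
  refine ⟨(fun x => x⁻¹) '' t, image_mem_map htf, ?_⟩
  rintro _ ⟨a, ha, rfl⟩ _ ⟨b, hb, rfl⟩
  have hab : dist (w⁻¹ * a * (w⁻¹ * b)⁻¹) 1 < δ :=
    calc dist (w⁻¹ * a * (w⁻¹ * b)⁻¹) 1 ≤ dist (w⁻¹ * a) 1 + dist (w⁻¹ * b)⁻¹ 1 :=
          dist_mul_one_le _ _
      _ = dist a w + dist b w := by
          rw [dist_inv_one, ← dist_eq_dist_inv_mul_one, ← dist_eq_dist_inv_mul_one]
      _ < δ / 2 + δ / 2 := add_lt_add (ht a ha w hwt) (ht b hb w hwt)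
      _ = δ := add_halves δ
  calc dist a⁻¹ b⁻¹ = dist (w * (w⁻¹ * a * (w⁻¹ * b)⁻¹) * w⁻¹) 1 := by
        rw [dist_inv_inv_eq_dist_mul_inv_one]; group
    _ < ε := hw _ (Subgroup.mem_top _) hab

theorem Cauchy.map_inv_of_isNilpotent [Group.IsNilpotent G]
    (hR : ∀ x : G, Continuous fun y : G => y * x) {f : Filter G} (hf : Cauchy f) :
    Cauchy (map (fun x => x⁻¹) f) := by
  obtain ⟨k, hk⟩ := Subgroup.nilpotent_iff_lowerCentralSeries.1 ‹Group.IsNilpotent G›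
  exact hf.map_inv_of_eventuallyEquicontinuousConjOn_top
    (eventuallyEquicontinuousConjOn_lowerCentralSeries hR hf (n := 0) (by rwa [Nat.zero_add]))

end LeftInvariant

theorem stmt9 {G : Type*} [Group G] [MetricSpace G] [Group.IsNilpotent G]
    (hleft : ∀ x y z : G, dist (x * y) (x * z) = dist y z)
    (hR : ∀ x : G, Continuous fun y : G => y * x) :
    Continuous (fun x : G => x⁻¹) ∧
      ∀ u : ℕ → G, CauchySeq u → CauchySeq fun n => (u n)⁻¹ := by
  have : IsIsometricSMul G G := ⟨fun c => Isometry.of_dist_eq (hleft c)⟩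
  refine ⟨continuous_inv_of_continuous_mul_const hR, fun u hu => ?_⟩
  simpa only [CauchySeq, map_map, Function.comp_def] using hu.map_inv_of_isNilpotent hR
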